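/- Fix a finite type space with K elements, prior weights p₀ : Fin K → ℝ with p₀ k > 0, and a convex function f : (0,∞) → ℝ with f(1) = 0, extended to 0 by f(0) = lim_{x→0⁺} f(x) (possibly +∞, working in extended reals). For γᵢ : Fin K → ℝ≥0, define h_k(γᵢ) = (∑ₘ γᵢ(m)) · f(γᵢ(k) / (p₀(k) · ∑ₘ γᵢ(m))), with the convention h_k(γᵢ) = 0 when ∑ₘ γᵢ(m) = 0. Then h_k : (Fin K → ℝ≥0) → ℝ≥0∞ is lower semi-continuous. -/

import Mathlib

/-! Writing `S = ∑ₘ γ m`, the function is `(s, t) ↦ s · f(t / s)`, the perspective of the extended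
`f`, evaluated at `(S, γ k / p₀ k)`. The extension of `f` is continuous on `[0, ∞)`, so the
perspective is continuous where `s ≠ 0`. At `s = 0` we also have `t = 0`, and a supporting line
`f x ≥ a (x - 1)` of `f` at `1` gives `s · f(t / s) ≥ a (t - s) ≥ -|a| (s + t) → 0`. -/

open Set Filter Topology
open scoped NNReal

theorem ConvexOn.exists_affine_le_of_mem_interior {S : Set ℝ} {f : ℝ → ℝ} {x : ℝ}
    (hf : ConvexOn ℝ S f) (hx : x ∈ interior S) :
    ∃ a : ℝ, ∀ y ∈ S, f x + a * (y - x) ≤ f y := by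
  refine ⟨derivWithin f (Ioi x) x, fun y hy => ?_⟩
  rcases lt_trichotomy y x with hyx | rfl | hxy
  · have h := (hf.slope_le_leftDeriv_of_mem_interior hy hx hyx).trans
      (hf.leftDeriv_le_rightDeriv_of_mem_interior hx)
    rw [slope_def_field, div_le_iff₀ (sub_pos.2 hyx)] at h
    linarith
  · simp
  · have h := hf.rightDeriv_le_slope_of_mem_interior hx hy hxy
    rw [slope_def_field, le_div_iff₀ (sub_pos.2 hxy)] at h
    linarith

theorem continuous_comp_coe_of_tendsto_nhdsGT_zero {f : ℝ → ℝ} {fext : ℝ → EReal}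
    (hf : ContinuousOn f (Ioi 0)) (hfe : ∀ x, 0 < x → fext x = f x)
    (hf0 : Tendsto (fun x => (f x : EReal)) (𝓝[>] 0) (𝓝 (fext 0))) :
    Continuous fun x : ℝ≥0 => fext x := by
  have hpos : ContinuousOn fext (Ioi 0) :=
    (continuous_coe_real_ereal.comp_continuousOn hf).congr fun x hx => hfe x hx
  have hzero : ContinuousWithinAt fext (Ici 0) 0 := by
    rw [← Ioi_insert, continuousWithinAt_insert_self]
    exact hf0.congr' (eventually_nhdsWithin_of_forall fun x hx => (hfe x hx).symm)
  have hnonneg : ContinuousOn fext (Ici 0) := by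
    intro x hx
    rcases (mem_Ici.1 hx).eq_or_lt with rfl | hx
    · exact hzero
    · exact (hpos.continuousAt (isOpen_Ioi.mem_nhds hx)).continuousWithinAt
  exact hnonneg.comp_continuous NNReal.continuous_coe fun x => x.2

noncomputable def perspective (g : ℝ≥0 → EReal) (q : ℝ≥0 × ℝ≥0) : EReal :=
  if q.1 = 0 then 0 else ((q.1 : ℝ) : EReal) * g (q.2 / q.1)

section perspective

variable {g : ℝ≥0 → EReal}

theorem continuousAt_perspective (hg : Continuous g) {q : ℝ≥0 × ℝ≥0} (hq : q.1 ≠ 0) :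
    ContinuousAt (perspective g) q := by
  have hq' : ((q.1 : ℝ) : EReal) ≠ 0 := by simpa using hq
  have hmul : ContinuousAt (fun q : ℝ≥0 × ℝ≥0 => ((q.1 : ℝ) : EReal) * g (q.2 / q.1)) q := by
    refine EReal.Tendsto.mul ?_ ?_ (.inl hq') (.inl hq') (.inl (EReal.coe_ne_bot _))
      (.inl (EReal.coe_ne_top _))
    · exact (continuous_coe_real_ereal.comp
        (NNReal.continuous_coe.comp continuous_fst)).continuousAt
    · exact hg.continuousAt.comp (continuous_snd.continuousAt.div continuous_fst.continuousAt hq)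
  refine hmul.congr ?_
  filter_upwards [continuous_fst.continuousAt.eventually_ne hq] with q' hq'
  simp [perspective, hq']

theorem neg_abs_mul_add_le_perspective {a : ℝ} (ha : ∀ x : ℝ≥0, ((a * (x - 1) : ℝ) : EReal) ≤ g x)
    (q : ℝ≥0 × ℝ≥0) : ((-|a| * (q.1 + q.2) : ℝ) : EReal) ≤ perspective g q := by
  have hneg : -|a| * (q.1 + q.2 : ℝ) ≤ 0 :=
    mul_nonpos_of_nonpos_of_nonneg (neg_nonpos.2 (abs_nonneg a)) (by positivity)
  by_cases hq : q.1 = 0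
  · rw [perspective, if_pos hq]
    exact_mod_cast hneg
  have hs : (0 : ℝ) < q.1 := by positivity
  calc ((-|a| * (q.1 + q.2) : ℝ) : EReal)
      ≤ ((q.1 * (a * ((q.2 / q.1 : ℝ≥0) - 1)) : ℝ) : EReal) := by
        refine EReal.coe_le_coe_iff.2 ?_
        have h : (q.1 : ℝ) * (a * ((q.2 / q.1 : ℝ≥0) - 1)) = a * (q.2 - q.1) := by
          rw [NNReal.coe_div]
          field_simp
        rw [h]
        nlinarith [neg_abs_le a, le_abs_self a]
    _ ≤ perspective g q := by
        rw [perspective, if_neg hq, EReal.coe_mul]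
        exact mul_le_mul_of_nonneg_left (ha _) (EReal.coe_nonneg.2 hs.le)

theorem lowerSemicontinuousAt_perspective_zero {a : ℝ}
    (ha : ∀ x : ℝ≥0, ((a * (x - 1) : ℝ) : EReal) ≤ g x) :
    LowerSemicontinuousAt (perspective g) 0 := by
  have hbound : Continuous fun q : ℝ≥0 × ℝ≥0 => ((-|a| * (q.1 + q.2) : ℝ) : EReal) :=
    continuous_coe_real_ereal.comp (by fun_prop)
  intro c hc
  simp only [perspective, Prod.fst_zero, if_true] at hc
  have hc' : c < ((-|a| * ((0 : ℝ≥0 × ℝ≥0).1 + (0 : ℝ≥0 × ℝ≥0).2) : ℝ) : EReal) := by simpa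
  filter_upwards [(hbound.tendsto 0).eventually (lt_mem_nhds hc')] with q hq
  exact hq.trans_le (neg_abs_mul_add_le_perspective ha q)

-- The hypothesis `hq` is essential: near `(0, t)` with `t > 0` the perspective tends to
-- `t · lim_{x → ∞} g x / x`, which may be negative.
theorem lowerSemicontinuousAt_perspective {a : ℝ} (hg : Continuous g)
    (ha : ∀ x : ℝ≥0, ((a * (x - 1) : ℝ) : EReal) ≤ g x) {q : ℝ≥0 × ℝ≥0}
    (hq : q.1 = 0 → q.2 = 0) : LowerSemicontinuousAt (perspective g) q := by
  by_cases h : q.1 = 0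
  · obtain rfl : q = 0 := Prod.ext h (hq h)
    exact lowerSemicontinuousAt_perspective_zero ha
  · exact (continuousAt_perspective hg h).lowerSemicontinuousAt

end perspective

/-- Lower semi-continuity of the per-action privacy-cost term `h_k`. -/
theorem hk_lowerSemicontinuous (K : ℕ) (p₀ : Fin K → ℝ) (hp₀ : ∀ k, 0 < p₀ k)
    (f : ℝ → ℝ) (hf : ConvexOn ℝ (Set.Ioi (0 : ℝ)) f) (hf1 : f 1 = 0)
    (fext : ℝ → EReal) (hfe : ∀ x : ℝ, 0 < x → fext x = (f x : EReal))
    (hf0 : Filter.Tendsto (fun x : ℝ => (f x : EReal))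
      (nhdsWithin 0 (Set.Ioi 0)) (nhds (fext 0)))
    (k : Fin K) :
    LowerSemicontinuous (fun γ : Fin K → NNReal =>
      if (∑ m, (γ m : ℝ)) = 0 then (0 : EReal)
      else ((∑ m, (γ m : ℝ) : ℝ) : EReal) *
        fext ((γ k : ℝ) / (p₀ k * ∑ m, (γ m : ℝ)))) := by
  obtain ⟨a, ha⟩ := hf.exists_affine_le_of_mem_interior (x := 1) (by simp)
  have hg : Continuous fun x : ℝ≥0 => fext x :=
    continuous_comp_coe_of_tendsto_nhdsGT_zero (hf.continuousOn isOpen_Ioi) hfe hf0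
  have hga (x : ℝ≥0) : ((a * (x - 1) : ℝ) : EReal) ≤ fext x := by
    refine le_on_closure (s := Ioi 0) (f := fun x : ℝ≥0 => ((a * (x - 1) : ℝ) : EReal))
      (fun y hy => ?_) (continuous_coe_real_ereal.comp (by fun_prop)).continuousOn hg.continuousOn
      (by simp [closure_Ioi])
    rw [hfe y hy]
    exact EReal.coe_le_coe_iff.2 (by linarith [ha y hy])
  let p : ℝ≥0 := ⟨p₀ k, (hp₀ k).le⟩
  have hlsc : LowerSemicontinuous (perspective (fun x : ℝ≥0 => fext x) ∘
      fun γ : Fin K → ℝ≥0 => (∑ m, γ m, γ k / p)) := fun γ =>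
    (lowerSemicontinuousAt_perspective hg hga fun h => by
      rw [Finset.sum_eq_zero_iff.1 h k (Finset.mem_univ k), zero_div]).comp
      (by fun_prop : Continuous fun γ : Fin K → ℝ≥0 => (∑ m, γ m, γ k / p)).continuousAt
  convert hlsc using 2 with γ
  simp only [Function.comp_apply, perspective, ← NNReal.coe_eq_zero, NNReal.coe_sum,
    NNReal.coe_div, NNReal.coe_mul, div_div]
  rfl
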